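/- arXiv:1502.04805 — 2 statements merged into one kernel-verified Lean document; each statement's English description precedes it below -/
import Mathlib

section
/- Let d ≥ 1, let r ≥ 2 be a prime, let N = (d+1)(r−1), and let k ≥ 1. Suppose that BMZ(d+k, r, ℝ^{d+k}) holds for every special coloring of Δ_{N'}, N' = (d+k+1)(r−1). Then BMZ(d, r, ℝ^d) holds for every general coloring C_0, C_1, …, C_{d+k} of Δ_N into d+k+1 classes with |C_i| ≤ r−1 for all i. -/
/-- The face of the standard `N`-simplex spanned by the set `S` of vertices:
points whose barycentric coordinates vanish outside `S`. -/
def simplexFace (N : ℕ) (S : Finset (Fin (N+1))) : Set (stdSimplex ℝ (Fin (N+1))) :=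
  {x | ∀ i, i ∉ S → (x : Fin (N+1) → ℝ) i = 0}

/-- `BMZ r C Y` : for every continuous map `f : Δ_N → Y` there are `r` pairwise
disjoint rainbow faces (for the coloring `C`) of `Δ_N` whose `f`-images have a
common point. -/
def BMZ {N m : ℕ} (r : ℕ) (C : Fin m → Finset (Fin (N+1)))
    (Y : Type*) [TopologicalSpace Y] : Prop :=
  ∀ f : stdSimplex ℝ (Fin (N+1)) → Y, Continuous f →
    ∃ σ : Fin r → Finset (Fin (N+1)),
      (∀ i j, (σ i ∩ C j).card ≤ 1) ∧
      (∀ i j, i ≠ j → Disjoint (σ i) (σ j)) ∧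
      (⋂ i, f '' simplexFace N (σ i)).Nonempty

/-- `C` is a coloring of the vertices of `Δ_N`: the classes are pairwise
disjoint and cover all the vertices. -/
def IsColoring {N m : ℕ} (C : Fin m → Finset (Fin (N+1))) : Prop :=
  (∀ i j, i ≠ j → Disjoint (C i) (C j)) ∧ Finset.univ.biUnion C = Finset.univ

/-- A special coloring of `Δ_N` for the parameters `(d, r)`:
`d+2` classes `C_0, …, C_{d+1}` with `|C_i| = r-1` for `0 ≤ i ≤ d` and
`|C_{d+1}| = 1`. -/
def IsSpecialColoring (d r N : ℕ) (C : Fin (d+2) → Finset (Fin (N+1))) : Prop :=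
  IsColoring C ∧ (∀ i : Fin (d+2), (i : ℕ) ≤ d → (C i).card = r - 1) ∧
    (C ⟨d+1, by omega⟩).card = 1

/-!
Pad the coloring with `k(r-1)` fresh vertices to a special coloring of `Δ_{N'}`,
`N' = N + k(r-1)`: each class is filled up to `r-1` vertices and one fresh vertex forms the
singleton class. Split the fresh vertices into `k` groups of `r-1` and extend `f` (precomposed
with a retraction `Δ_{N'} → Δ_N`) by the `k` coordinates "total weight on a group". Among `r`
pairwise disjoint faces one misses a given group, so at a common value of the extended map
that weight is `0` for every face; all the preimages then lie in `Δ_N`, where the retraction is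
the identity, and the traces of the faces on the old vertices are still rainbow and disjoint.
-/

open Finset

theorem Finset.exists_partition_card_eq {α ι : Type*} [Fintype ι] [DecidableEq α]
    (s : Finset α) (n : ι → ℕ) (h : ∑ i, n i = s.card) :
    ∃ P : ι → Finset α, (∀ i, (P i).card = n i) ∧
      (∀ i j, i ≠ j → Disjoint (P i) (P j)) ∧ univ.biUnion P = s := by
  obtain ⟨ε⟩ : Nonempty ((Σ i, Fin (n i)) ≃ s) := ⟨Fintype.equivOfCardEq (by simp [h])⟩
  refine ⟨fun i => univ.map ⟨fun a => ε ⟨i, a⟩, fun a b hab => ?_⟩, fun i => ?_,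
    fun i j hij => ?_, ?_⟩
  · exact eq_of_heq (Sigma.mk.inj_iff.mp (ε.injective (Subtype.ext hab))).2
  · simp
  · simp only [disjoint_left, mem_map, mem_univ, true_and]
    rintro _ ⟨a, rfl⟩ ⟨b, hb⟩
    exact hij (congrArg Sigma.fst (ε.injective (Subtype.ext hb))).symm
  · ext x
    simp only [mem_biUnion, mem_univ, true_and, mem_map]
    refine ⟨fun ⟨i, a, hx⟩ => hx ▸ (ε ⟨i, a⟩).2, fun hx => ?_⟩
    obtain ⟨⟨i, a⟩, ha⟩ := ε.surjective ⟨x, hx⟩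
    exact ⟨i, a, congrArg Subtype.val ha⟩

theorem IsColoring.sum_card {N m : ℕ} {C : Fin m → Finset (Fin (N+1))} (hC : IsColoring C) :
    ∑ i, (C i).card = N + 1 := by
  rw [← card_biUnion fun i _ j _ hij => hC.1 i j hij, hC.2, card_univ, Fintype.card_fin]

theorem IsColoring.snoc_empty {N m : ℕ} {C : Fin m → Finset (Fin (N+1))} (hC : IsColoring C) :
    IsColoring (Fin.snoc C ∅ : Fin (m+1) → Finset (Fin (N+1))) := by
  refine ⟨fun i j hij => ?_, eq_univ_of_forall fun a => ?_⟩
  · induction i using Fin.lastCases with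
    | last => simp
    | cast i =>
      induction j using Fin.lastCases with
      | last => simp
      | cast j => simpa using hC.1 i j (fun h => hij (h ▸ rfl))
  · obtain ⟨i, -, hi⟩ := mem_biUnion.mp (hC.2 ▸ mem_univ a)
    exact mem_biUnion.mpr ⟨i.castSucc, mem_univ _, by simpa using hi⟩

theorem IsColoring.exists_extension {m M N : ℕ} {C : Fin m → Finset (Fin (M+1))}
    (hC : IsColoring C) (h : M + 1 ≤ N + 1) (t : Fin m → ℕ) (hCt : ∀ i, (C i).card ≤ t i)
    (ht : ∑ i, t i = N + 1) :
    ∃ C' : Fin m → Finset (Fin (N+1)), IsColoring C' ∧ (∀ i, (C' i).card = t i) ∧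
      ∀ i, (C i).map (Fin.castLEEmb h) ⊆ C' i := by
  set old := univ.map (Fin.castLEEmb h)
  have hfresh : ∑ i, (t i - (C i).card) = oldᶜ.card := by
    rw [sum_tsub_distrib _ fun i _ => hCt i, ht, hC.sum_card, card_compl, card_map]
    simp
  obtain ⟨P, hPcard, hPdisj, hPcover⟩ := oldᶜ.exists_partition_card_eq _ hfresh
  have hold : ∀ i j, Disjoint ((C i).map (Fin.castLEEmb h)) (P j) :=
    fun i j => disjoint_of_subset_left (map_subset_map.mpr (subset_univ _))
      (disjoint_of_subset_right (hPcover ▸ subset_biUnion_of_mem P (mem_univ j))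
        disjoint_compl_right)
  refine ⟨fun i => (C i).map (Fin.castLEEmb h) ∪ P i, ⟨fun i j hij => ?_, ?_⟩, fun i => ?_,
    fun i => subset_union_left⟩
  · exact disjoint_union_left.mpr
      ⟨disjoint_union_right.mpr ⟨(disjoint_map _).mpr (hC.1 i j hij), hold i j⟩,
        disjoint_union_right.mpr ⟨(hold j i).symm, hPdisj i j hij⟩⟩
  · refine eq_univ_of_forall fun v => ?_
    by_cases hv : v ∈ old
    · obtain ⟨a, -, rfl⟩ := mem_map.mp hv
      obtain ⟨i, -, hi⟩ := mem_biUnion.mp (hC.2 ▸ mem_univ a)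
      exact mem_biUnion.mpr ⟨i, mem_univ i, mem_union_left _ (mem_map_of_mem _ hi)⟩
    · obtain ⟨i, -, hi⟩ := mem_biUnion.mp (hPcover ▸ mem_compl.mpr hv)
      exact mem_biUnion.mpr ⟨i, mem_univ i, mem_union_right _ hi⟩
  · rw [card_union_of_disjoint (hold i i), card_map, hPcard]
    exact Nat.add_sub_of_le (hCt i)

theorem IsColoring.exists_specialColoring_extension {D r M : ℕ}
    {C : Fin (D+1) → Finset (Fin (M+1))} (hC : IsColoring C) (hcard : ∀ i, (C i).card ≤ r - 1)
    (h : M + 1 ≤ (D+1)*(r-1) + 1) :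
    ∃ C' : Fin (D+2) → Finset (Fin ((D+1)*(r-1)+1)),
      IsSpecialColoring D r ((D+1)*(r-1)) C' ∧
        ∀ i, (C i).map (Fin.castLEEmb h) ⊆ C' i.castSucc := by
  obtain ⟨C', hC', hcard', hext⟩ := hC.snoc_empty.exists_extension h
    (Fin.snoc (fun _ => r - 1) 1) (Fin.lastCases (by simp) (by simpa using hcard))
    (by simp [Fin.sum_univ_castSucc])
  refine ⟨C', ⟨hC', fun i hi => ?_, (by simpa using hcard' (Fin.last _) :
    (C' (Fin.last _)).card = 1)⟩, fun i => by simpa using hext i.castSucc⟩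
  obtain ⟨j, rfl⟩ : ∃ j : Fin (D+1), j.castSucc = i := ⟨⟨i, by omega⟩, rfl⟩
  simpa using hcard' j.castSucc

theorem exists_disjoint_of_card_lt {α ι : Type*} [Fintype ι] {σ : ι → Finset α}
    (hσ : ∀ i j, i ≠ j → Disjoint (σ i) (σ j)) {G : Finset α}
    (hG : G.card < Fintype.card ι) : ∃ i, Disjoint (σ i) G := by
  by_contra! hcon
  choose w hw using fun i => not_disjoint_iff.mp (hcon i)
  have := card_le_card_of_injOn (s := univ) w (fun i _ => (hw i).2) fun i _ j _ hij => by
    by_contra hne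
    exact disjoint_left.mp (hσ i j hne) (hw i).1 (hij ▸ (hw j).1)
  exact absurd this (by simpa using hG)

theorem simplexFace.eq_zero_of_sum_eq {N r : ℕ} {σ : Fin r → Finset (Fin (N+1))}
    (hσ : ∀ i j, i ≠ j → Disjoint (σ i) (σ j)) {x : Fin r → stdSimplex ℝ (Fin (N+1))}
    (hx : ∀ i, x i ∈ simplexFace N (σ i)) {G : Finset (Fin (N+1))} (hG : G.card < r)
    (hsum : ∀ i j, ∑ v ∈ G, x i v = ∑ v ∈ G, x j v) (i : Fin r) {v : Fin (N+1)}
    (hv : v ∈ G) : x i v = 0 := by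
  obtain ⟨i₀, hi₀⟩ := exists_disjoint_of_card_lt hσ (by simpa using hG)
  have hzero : ∑ w ∈ G, x i₀ w = 0 :=
    sum_eq_zero fun w hw => hx i₀ w (disjoint_right.mp hi₀ hw)
  exact (sum_eq_zero_iff_of_nonneg fun w _ => stdSimplex.zero_le _ w).mp
    (hsum i i₀ ▸ hzero) v hv

theorem stdSimplex.map_apply_of_leftInverse {S X Y : Type*} [Semiring S] [PartialOrder S]
    [IsOrderedRing S] [Fintype X] [Fintype Y] [DecidableEq X] {φ : Y → X} {ι : X → Y}
    (h : Function.LeftInverse φ ι) {x : stdSimplex S Y} (hx : ∀ y ∉ Set.range ι, x y = 0)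
    (a : X) : map φ x a = x (ι a) := by
  rw [map_coe, FunOnFinite.linearMap_apply_apply, sum_eq_single_of_mem (ι a) (by simp [h a])]
  intro y hy hne
  by_cases hy' : y ∈ Set.range ι
  · obtain ⟨b, rfl⟩ := hy'
    simp only [mem_filter, h b] at hy
    exact absurd (hy.2 ▸ rfl) hne
  · exact hx y hy'

theorem continuous_toLp_append {X : Type*} [TopologicalSpace X] {d k : ℕ}
    {f : X → EuclideanSpace ℝ (Fin d)} {g : X → Fin k → ℝ} (hf : Continuous f)
    (hg : Continuous g) : Continuous fun x => WithLp.toLp 2 (Fin.append (f x).ofLp (g x)) := by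
  refine (PiLp.continuous_toLp 2 _).comp (continuous_pi fun j => ?_)
  induction j using Fin.addCases with
  | left j =>
    simp only [Fin.append_left]
    exact (PiLp.continuous_apply 2 _ j).comp hf
  | right j =>
    simp only [Fin.append_right]
    exact (continuous_apply j).comp hg

theorem simplexFace.map_invFun_castLEEmb_mem {M N : ℕ} (h : M + 1 ≤ N + 1)
    {σ : Finset (Fin (N+1))} {x : stdSimplex ℝ (Fin (N+1))} (hx : x ∈ simplexFace N σ)
    (hvanish : ∀ v ∉ Set.range (Fin.castLEEmb h), x v = 0) :
    stdSimplex.map (Function.invFun (Fin.castLEEmb h)) x ∈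
      simplexFace M {a | Fin.castLEEmb h a ∈ σ} := by
  intro a ha
  rw [stdSimplex.map_apply_of_leftInverse
    (Function.leftInverse_invFun (Fin.castLEEmb h).injective) hvanish]
  exact hx _ (by simpa using ha)

theorem BMZ.of_extension {M N m m' d k r : ℕ} (hr : 0 < r) (h : M + 1 ≤ N + 1)
    (hN : N = M + k * (r - 1)) {C : Fin m → Finset (Fin (M+1))}
    {C' : Fin m' → Finset (Fin (N+1))} (ι : Fin m → Fin m')
    (hext : ∀ j, (C j).map (Fin.castLEEmb h) ⊆ C' (ι j))
    (hC' : BMZ r C' (EuclideanSpace ℝ (Fin (d+k)))) : BMZ r C (EuclideanSpace ℝ (Fin d)) := by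
  intro f hf
  obtain ⟨G, hGcard, -, hGcover⟩ := (univ.map (Fin.castLEEmb h))ᶜ.exists_partition_card_eq
    (fun _ : Fin k => r - 1) (by simp [card_compl]; omega)
  set ρ := stdSimplex.map (S := ℝ) (Function.invFun (Fin.castLEEmb h))
  set F : stdSimplex ℝ (Fin (N+1)) → EuclideanSpace ℝ (Fin (d+k)) := fun x =>
    WithLp.toLp 2 (Fin.append (f (ρ x)).ofLp fun g => ∑ v ∈ G g, x v)
  have hF : Continuous F := continuous_toLp_append (hf.comp (stdSimplex.continuous_map _))
    (continuous_pi fun g => continuous_finsetSum _ fun v _ =>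
      (continuous_apply v).comp continuous_subtype_val)
  obtain ⟨σ', hrainbow, hdisj, y, hy⟩ := hC' F hF
  simp only [Set.mem_iInter, Set.mem_image] at hy
  choose x hx hxy using hy
  have hleft : ∀ i, f (ρ (x i)) = WithLp.toLp 2 fun j => y (Fin.castAdd k j) := by
    intro i
    ext j
    simp [← hxy i, F]
  have hright : ∀ i g, ∑ v ∈ G g, x i v = y (Fin.natAdd d g) := by
    intro i g
    simp [← hxy i, F]
  have hvanish : ∀ i, ∀ v ∉ Set.range (Fin.castLEEmb h), x i v = 0 := by
    intro i v hv
    have hnew : v ∈ univ.biUnion G := by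
      rw [hGcover, mem_compl, mem_map]
      rintro ⟨a, -, rfl⟩
      exact hv ⟨a, rfl⟩
    obtain ⟨g, -, hg⟩ := mem_biUnion.mp hnew
    exact simplexFace.eq_zero_of_sum_eq hdisj hx (by rw [hGcard g]; omega)
      (fun i j => by rw [hright, hright]) i hg
  set σ : Fin r → Finset (Fin (M+1)) := fun i => {a | Fin.castLEEmb h a ∈ σ' i}
  have hσ : ∀ i, (σ i).map (Fin.castLEEmb h) ⊆ σ' i := by
    intro i v hv
    obtain ⟨a, ha, rfl⟩ := mem_map.mp hv
    simpa [σ] using ha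
  refine ⟨σ, fun i j => ?_,
    fun i j hij => (disjoint_map _).mp ((hdisj i j hij).mono (hσ i) (hσ j)),
    WithLp.toLp 2 fun j => y (Fin.castAdd k j), Set.mem_iInter.mpr fun i =>
      ⟨_, simplexFace.map_invFun_castLEEmb_mem h (hx i) (hvanish i), hleft i⟩⟩
  calc (σ i ∩ C j).card = ((σ i ∩ C j).map (Fin.castLEEmb h)).card := (card_map _).symm
    _ ≤ (σ' i ∩ C' (ι j)).card := by
      rw [map_inter]
      exact card_le_card (inter_subset_inter (hσ i) (hext j))
    _ ≤ 1 := hrainbow i (ι j)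

theorem reduction_prop_general_general (d r k : ℕ) (hr : 2 ≤ r)
    (N : ℕ) (hN : N = (d+1)*(r-1))
    (hyp : ∀ C' : Fin (d+k+2) → Finset (Fin ((d+k+1)*(r-1)+1)),
      IsSpecialColoring (d+k) r ((d+k+1)*(r-1)) C' →
      BMZ r C' (EuclideanSpace ℝ (Fin (d+k)))) :
    ∀ C : Fin (d+k+1) → Finset (Fin (N+1)),
      IsColoring C → (∀ i, (C i).card ≤ r - 1) →
      BMZ r C (EuclideanSpace ℝ (Fin d)) := by
  intro C hC hcard
  have hsplit : (d+k+1)*(r-1) = N + k*(r-1) := by rw [hN]; ring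
  have h : N + 1 ≤ (d+k+1)*(r-1) + 1 := by omega
  obtain ⟨C', hspecial, hext⟩ := hC.exists_specialColoring_extension hcard h
  exact BMZ.of_extension (by omega) h hsplit Fin.castSucc hext (hyp C' hspecial)

/-- **Proposition 2.5**: the reduction for a general coloring into `d+k+1`
classes, assuming BMZ for special colorings `k` dimensions up. -/
theorem reduction_prop_general (d r k : ℕ) (hd : 1 ≤ d) (hr : 2 ≤ r) (hrp : r.Prime)
    (hk : 1 ≤ k) (N : ℕ) (hN : N = (d+1)*(r-1))
    (hyp : ∀ C' : Fin (d+k+2) → Finset (Fin ((d+k+1)*(r-1)+1)),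
      IsSpecialColoring (d+k) r ((d+k+1)*(r-1)) C' →
      BMZ r C' (EuclideanSpace ℝ (Fin (d+k)))) :
    ∀ C : Fin (d+k+1) → Finset (Fin (N+1)),
      IsColoring C → (∀ i, (C i).card ≤ r - 1) →
      BMZ r C (EuclideanSpace ℝ (Fin d)) :=
  reduction_prop_general_general d r k hr N hN hyp
end

section
/- (Reduction Lemma for maps to manifolds) Let d ≥ 1, r ≥ 2, and N = (d+1)(r−1), and let M be a topological d-manifold (a second-countable Hausdorff topological space in which every point has a neighborhood homeomorphic to an open subset of ℝ^d). Let 𝕀 = [0,1] denote the unit interval. Suppose that for every k ≥ 0, BMZ(d+k, r, M × 𝕀^k) holds for every special coloring of Δ_{N_k}, N_k = (d+k+1)(r−1). Then BMZ(d, r, M) holds for every general coloring of Δ_N. -/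
open Finset

theorem Finset.exists_cover_of_card_le_mul {β : Type*} [DecidableEq β] (s : Finset β)
    {k n : ℕ} (h : #s ≤ k * n) :
    ∃ G : Fin k → Finset β, (∀ j, #(G j) ≤ n) ∧ ∀ b ∈ s, ∃ j, b ∈ G j := by
  induction k generalizing s with
  | zero =>
    obtain rfl : s = ∅ := card_eq_zero.mp (by simpa using h)
    exact ⟨Fin.elim0, fun j => j.elim0, by simp⟩
  | succ k ih =>
    obtain ⟨t, hts, ht⟩ := exists_subset_card_eq (min_le_right n #s)
    obtain ⟨G, hG, hcover⟩ := ih (s \ t) (by rw [card_sdiff_of_subset hts, ht]; grind)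
    refine ⟨Fin.cons t G, fun j => Fin.cases (by simp [ht]) (by simpa using hG) j, fun b hb => ?_⟩
    by_cases hbt : b ∈ t
    · exact ⟨0, by simpa using hbt⟩
    · obtain ⟨j, hj⟩ := hcover b (mem_sdiff.mpr ⟨hb, hbt⟩)
      exact ⟨j.succ, by simpa using hj⟩

theorem exists_disjoint_of_card_lt_s14 {β : Type*} {r : ℕ} {σ : Fin r → Finset β}
    (hσ : ∀ i j, i ≠ j → Disjoint (σ i) (σ j)) {s : Finset β} (hs : #s < r) :
    ∃ i, Disjoint (σ i) s := by
  by_contra! h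
  choose a has using fun i => not_disjoint_iff.mp (h i)
  obtain ⟨i, -, j, -, hij, haij⟩ := exists_ne_map_eq_of_card_lt_of_maps_to
    (s := univ) (t := s) (by simpa using hs) (f := a) (fun i _ => (has i).2)
  exact disjoint_left.mp (hσ i j hij) (has i).1 (haij ▸ (has j).1)

theorem exists_embedding_of_card_fiber_le {α β ι : Type*} [Fintype α] [Fintype β] [Fintype ι]
    [DecidableEq ι] (c : α → ι) (t : ι → ℕ) (hc : ∀ i, #{a | c a = i} ≤ t i)
    (hβ : Fintype.card β = ∑ i, t i) :
    ∃ (e : α ↪ β) (c' : β → ι), (∀ a, c' (e a) = c a) ∧ ∀ i, #{b | c' b = i} = t i := by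
  have hemb : ∀ i, Nonempty ({a // c a = i} ↪ Fin (t i)) := fun i =>
    Function.Embedding.nonempty_of_card_le (by simpa [Fintype.card_subtype] using hc i)
  let emb : α ↪ Σ i, Fin (t i) := (Equiv.sigmaFiberEquiv c).symm.toEmbedding.trans
    (Function.Embedding.sigmaMap (Function.Embedding.refl ι) fun i => (hemb i).some)
  let E : β ≃ Σ i, Fin (t i) := Fintype.equivOfCardEq (by simp [hβ])
  refine ⟨emb.trans E.symm.toEmbedding, fun b => (E b).1,
    fun a => congrArg Sigma.fst (E.apply_symm_apply (emb a)), fun i => ?_⟩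
  rw [card_equiv E (t := {x | x.1 = i}) (by simp), ← Fintype.card_subtype,
    Fintype.card_congr (Equiv.sigmaSubtype i), Fintype.card_fin]

section

variable {ι : Type*} [Fintype ι]

noncomputable def massOn (s : Finset ι) (x : stdSimplex ℝ ι) : Set.Icc (0 : ℝ) 1 :=
  ⟨∑ b ∈ s, x b, sum_nonneg fun b _ => stdSimplex.zero_le x b,
    (sum_le_sum_of_subset_of_nonneg (subset_univ s) fun b _ _ => stdSimplex.zero_le x b).trans
      (stdSimplex.sum_eq_one x).le⟩

theorem continuous_massOn (s : Finset ι) : Continuous (massOn s) :=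
  (continuous_finsetSum s fun b _ =>
    (continuous_apply b).comp continuous_subtype_val).subtype_mk _

theorem massOn_eq_zero_iff {s : Finset ι} {x : stdSimplex ℝ ι} :
    massOn s x = 0 ↔ ∀ b ∈ s, x b = 0 := by
  rw [← Subtype.coe_inj]
  exact sum_eq_zero_iff_of_nonneg fun b _ => stdSimplex.zero_le x b

end

theorem massOn_eq_zero_of_mem_simplexFace {N : ℕ} {σ s : Finset (Fin (N + 1))}
    {x : stdSimplex ℝ (Fin (N + 1))} (hx : x ∈ simplexFace N σ) (hσs : Disjoint σ s) :
    massOn s x = 0 :=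
  massOn_eq_zero_iff.mpr fun b hb => hx b (disjoint_right.mp hσs hb)

theorem map_invFun_mem_simplexFace {N N' : ℕ} (e : Fin (N + 1) ↪ Fin (N' + 1))
    {σ : Finset (Fin (N' + 1))} {x : stdSimplex ℝ (Fin (N' + 1))}
    (hx : x ∈ simplexFace N' σ) (hrange : ∀ b ∉ Set.range e, x b = 0) :
    stdSimplex.map (Function.invFun e) x ∈ simplexFace N (σ.preimage e e.injective.injOn) := by
  intro a ha
  rw [stdSimplex.map_coe, FunOnFinite.linearMap_apply_apply]
  refine sum_eq_zero fun b hb => ?_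
  by_cases hbe : b ∈ Set.range e
  · obtain ⟨a', rfl⟩ := hbe
    rw [mem_filter, Function.leftInverse_invFun e.injective] at hb
    rw [← hb.2] at ha
    exact hx _ (by simpa using ha)
  · exact hrange b hbe

theorem BMZ.of_extension_s14 {N N' m m' k r : ℕ} {Y : Type*} [TopologicalSpace Y]
    {C : Fin m → Finset (Fin (N + 1))} {C' : Fin m' → Finset (Fin (N' + 1))}
    (h : BMZ r C' (Y × (Fin k → Set.Icc (0 : ℝ) 1)))
    (e : Fin (N + 1) ↪ Fin (N' + 1)) (hC : ∀ j, ∃ j', ∀ a ∈ C j, e a ∈ C' j')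
    (G : Fin k → Finset (Fin (N' + 1))) (hG : ∀ j, #(G j) < r)
    (hcover : ∀ b ∉ Set.range e, ∃ j, b ∈ G j) :
    BMZ r C Y := by
  intro f hf
  obtain ⟨σ, hrainbow, hdisj, p, hp⟩ :=
    h (fun x => (f (stdSimplex.map (Function.invFun e) x), fun j => massOn (G j) x))
      ((hf.comp (stdSimplex.continuous_map _)).prodMk
        (continuous_pi fun j => continuous_massOn (G j)))
  choose y hyσ hyp using Set.mem_iInter.mp hp
  have hmass : ∀ i j, massOn (G j) (y i) = 0 := by
    intro i j
    obtain ⟨i₀, hi₀⟩ := exists_disjoint_of_card_lt_s14 hdisj (hG j)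
    have hyi := congrArg (fun q => q.2 j) (hyp i)
    have hyi₀ := congrArg (fun q => q.2 j) (hyp i₀)
    simp only at hyi hyi₀
    rw [hyi, ← hyi₀, massOn_eq_zero_of_mem_simplexFace (hyσ i₀) hi₀]
  have hrange : ∀ i, ∀ b ∉ Set.range e, y i b = 0 := by
    intro i b hb
    obtain ⟨j, hj⟩ := hcover b hb
    exact massOn_eq_zero_iff.mp (hmass i j) b hj
  refine ⟨fun i => (σ i).preimage e e.injective.injOn, fun i j => ?_,
    fun i i' hii' => disjoint_preimage (hdisj i i' hii'),
    p.1, Set.mem_iInter.mpr fun i =>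
      ⟨_, map_invFun_mem_simplexFace e (hyσ i) (hrange i), congrArg Prod.fst (hyp i)⟩⟩
  obtain ⟨j', hj'⟩ := hC j
  calc #((σ i).preimage e e.injective.injOn ∩ C j)
      ≤ #(σ i ∩ C' j') := card_le_card_of_injOn e (fun a ha => by
        simp only [coe_inter, Set.mem_inter_iff, mem_coe, mem_preimage] at ha ⊢
        exact ⟨ha.1, hj' a ha.2⟩) e.injective.injOn
    _ ≤ 1 := hrainbow i j'

namespace IsColoring

variable {N m : ℕ} {C : Fin m → Finset (Fin (N + 1))}

theorem exists_color (hC : IsColoring C) :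
    ∃ c : Fin (N + 1) → Fin m, ∀ v j, c v = j ↔ v ∈ C j := by
  have hmem : ∀ v, ∃ j, v ∈ C j := fun v => by
    simpa using (hC.2.symm ▸ mem_univ v : v ∈ univ.biUnion C)
  choose c hc using hmem
  refine ⟨c, fun v j => ⟨fun h => h ▸ hc v, fun hv => ?_⟩⟩
  by_contra hne
  exact disjoint_left.mp (hC.1 _ _ hne) (hc v) hv

theorem sum_card_s14 (hC : IsColoring C) : ∑ j, #(C j) = N + 1 := by
  rw [← card_biUnion fun i _ j _ hij => hC.1 i j hij, hC.2, card_univ, Fintype.card_fin]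

end IsColoring

theorem isColoring_fiber {N m : ℕ} (c : Fin (N + 1) → Fin m) :
    IsColoring fun j => ({v | c v = j} : Finset (Fin (N + 1))) :=
  ⟨fun i j hij => disjoint_filter.mpr fun v _ hi hj => hij (hi ▸ hj),
    eq_univ_of_forall fun v => mem_biUnion.mpr ⟨c v, mem_univ _, by simp⟩⟩

theorem IsColoring.exists_special_extension {N d r : ℕ} {C : Fin (d + 1) → Finset (Fin (N + 1))}
    (hC : IsColoring C) (hcard : ∀ j, #(C j) ≤ r - 1) :
    ∃ (e : Fin (N + 1) ↪ Fin ((d + 1) * (r - 1) + 1))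
      (C' : Fin (d + 2) → Finset (Fin ((d + 1) * (r - 1) + 1))),
      IsSpecialColoring d r ((d + 1) * (r - 1)) C' ∧ ∀ j, ∀ a ∈ C j, e a ∈ C' j.castSucc := by
  obtain ⟨c, hc⟩ := hC.exists_color
  let t : Fin (d + 2) → ℕ := fun j => if j = Fin.last _ then 1 else r - 1
  have hfiber : ∀ j, #{a | (c a).castSucc = j} ≤ t j := by
    refine Fin.lastCases ?_ fun j => ?_
    · simp [Fin.castSucc_ne_last]
    · simpa [t, Fin.castSucc_ne_last, hc] using hcard j
  obtain ⟨e, c', hc'e, hc'⟩ := exists_embedding_of_card_fiber_le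
    (β := Fin ((d + 1) * (r - 1) + 1)) _ t hfiber (by
    simp [t, Fin.sum_univ_castSucc, Fin.castSucc_ne_last])
  refine ⟨e, fun j => {b | c' b = j}, ⟨isColoring_fiber c', fun j hj => ?_, ?_⟩,
    fun j a ha => by simp [hc'e, (hc a j).mpr ha]⟩
  · exact (hc' j).trans (if_neg (Fin.ne_of_val_ne (by simp; omega)))
  · exact (hc' _).trans (if_pos rfl)

theorem reduction_lemma_manifold_general (d r : ℕ) (hr : 2 ≤ r)
    (M : Type*) [TopologicalSpace M]
    (hyp : ∀ k : ℕ, ∀ C : Fin (d+k+2) → Finset (Fin ((d+k+1)*(r-1)+1)),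
      IsSpecialColoring (d+k) r ((d+k+1)*(r-1)) C →
      BMZ r C (M × (Fin k → (Set.Icc (0:ℝ) 1)))) :
    ∀ m : ℕ, ∀ C : Fin m → Finset (Fin ((d+1)*(r-1)+1)),
      IsColoring C → (∀ i, (C i).card ≤ r - 1) →
      BMZ r C M := by
  intro m C hC hcard
  have hm : d + 1 < m := lt_of_mul_lt_mul_right' <|
    calc (d + 1) * (r - 1) < ∑ j, #(C j) := by rw [hC.sum_card_s14]; omega
      _ ≤ ∑ _j : Fin m, (r - 1) := sum_le_sum fun j _ => hcard j
      _ = m * (r - 1) := by simp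
  obtain ⟨k, rfl⟩ : ∃ k, m = d + k + 1 := ⟨m - (d + 1), by omega⟩
  obtain ⟨e, C', hC', he⟩ := hC.exists_special_extension hcard
  have hnew : #(univ.map e)ᶜ ≤ k * (r - 1) := by
    simp only [card_compl, card_map, card_univ, Fintype.card_fin]
    rw [show (d + k + 1) * (r - 1) = (d + 1) * (r - 1) + k * (r - 1) by ring]
    omega
  obtain ⟨G, hG, hcover⟩ := exists_cover_of_card_le_mul _ hnew
  exact (hyp k C' hC').of_extension_s14 e (fun j => ⟨_, he j⟩) G (fun j => by have := hG j; omega)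
    fun b hb => hcover b (by simpa using hb)

/-- **Reduction Lemma for maps to manifolds.** `M` is a second-countable
Hausdorff space, each of whose points has a neighborhood homeomorphic to an
open subset of `ℝ^d` (a chart into `EuclideanSpace ℝ (Fin d)`); `𝕀^k` is the
`k`-fold power of the unit interval `[0,1]`. If for every `k ≥ 0`,
BMZ(d+k, r, M × 𝕀^k) holds for every special coloring of `Δ_{N_k}`,
`N_k = (d+k+1)(r-1)`, then BMZ(d, r, M) holds for every general coloring of
`Δ_N`, `N = (d+1)(r-1)`. -/
theorem reduction_lemma_manifold (d r : ℕ) (hd : 1 ≤ d) (hr : 2 ≤ r)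
    (M : Type*) [TopologicalSpace M] [T2Space M] [SecondCountableTopology M]
    [ChartedSpace (EuclideanSpace ℝ (Fin d)) M]
    (hyp : ∀ k : ℕ, ∀ C : Fin (d+k+2) → Finset (Fin ((d+k+1)*(r-1)+1)),
      IsSpecialColoring (d+k) r ((d+k+1)*(r-1)) C →
      BMZ r C (M × (Fin k → (Set.Icc (0:ℝ) 1)))) :
    ∀ m : ℕ, ∀ C : Fin m → Finset (Fin ((d+1)*(r-1)+1)),
      IsColoring C → (∀ i, (C i).card ≤ r - 1) →
      BMZ r C M :=
  reduction_lemma_manifold_general d r hr M hyp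
end
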